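/- arXiv:1604.03015 — 2 statements merged into one kernel-verified Lean document; each statement's English description precedes it below -/
import Mathlib

section
/- Let h ≥ 1, ε > 0, and let M₀, …, M_h be finite modules over commutative rings in which 1, …, h are units, with |Mᵢ| > (h+1)/ε for all i. Let W = ⊕ᵢ₌₀ʰ Mᵢ and define f : W → W by f(x₀,…,x_h) = (0, −(1/h)x₁, …, −(i/h)xᵢ, …, −x_h). Then the set L₁ = {j·w + h·f(w) : w ∈ W, 0 ≤ j ≤ h} satisfies |L₁| < ε·|W|. -/
/-!
The `j`-th coordinate of `j • w + h • f w` is `j • w j - j • w j = 0`, so `L₁` lies in the union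
of the `h + 1` kernels of the coordinate projections `W → Mᵢ`. The `i`-th kernel has
`|W| / |Mᵢ| < ε |W| / (h + 1)` elements, and the union bound finishes the proof.
-/

open Finset

theorem Pi.card_ker_evalAddMonoidHom_mul_card {ι : Type*} (M : ι → Type*) [∀ i, AddGroup (M i)]
    (i : ι) : Nat.card (Pi.evalAddMonoidHom M i).ker * Nat.card (M i) = Nat.card (∀ k, M k) := by
  have hsurj : (Pi.evalAddMonoidHom M i).range = ⊤ :=
    AddMonoidHom.range_eq_top.2 (Function.surjective_eval i)
  rw [← AddSubgroup.card_mul_index (Pi.evalAddMonoidHom M i).ker, AddSubgroup.index_ker, hsurj, AddSubgroup.card_top]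

theorem ncard_setOf_exists_apply_eq_zero_lt {ι : Type*} [Fintype ι] [Nonempty ι]
    (M : ι → Type*) [∀ i, AddGroup (M i)] [∀ i, Finite (M i)] {ε : ℝ} (hε : 0 < ε)
    (hcard : ∀ i, (Fintype.card ι : ℝ) / ε < Nat.card (M i)) :
    ({z : ∀ i, M i | ∃ i, z i = 0}.ncard : ℝ) < ε * Nat.card (∀ i, M i) := by
  set K : ι → AddSubgroup (∀ i, M i) := fun i => (Pi.evalAddMonoidHom M i).ker
  have hunion : {z : ∀ i, M i | ∃ i, z i = 0} = ⋃ i ∈ (univ : Finset ι), (K i : Set _) := by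
    ext z; simp [K]
  have hK : ∀ i, (Nat.card (K i) : ℝ) < ε * Nat.card (∀ i, M i) / Fintype.card ι := by
    intro i
    have hprod : (Nat.card (K i) : ℝ) * Nat.card (M i) = Nat.card (∀ i, M i) := by
      exact_mod_cast Pi.card_ker_evalAddMonoidHom_mul_card M i
    have hKpos : (0 : ℝ) < Nat.card (K i) := by exact_mod_cast Nat.card_pos
    have hι : (0 : ℝ) < Fintype.card ι := by exact_mod_cast Fintype.card_pos
    have hMi := (div_lt_iff₀ hε).1 (hcard i)
    rw [lt_div_iff₀ hι, ← hprod]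
    nlinarith
  calc ({z : ∀ i, M i | ∃ i, z i = 0}.ncard : ℝ)
      ≤ ∑ i, (Nat.card (K i) : ℝ) := by
        rw [hunion]
        have := univ.set_ncard_biUnion_le fun i => (K i : Set (∀ i, M i))
        simp only [← Nat.card_coe_set_eq, SetLike.coe_sort_coe] at this
        exact_mod_cast this
    _ < ∑ _i : ι, ε * Nat.card (∀ i, M i) / Fintype.card ι :=
        sum_lt_sum_of_nonempty univ_nonempty fun i _ => hK i
    _ = ε * Nat.card (∀ i, M i) := by
        rw [sum_const, card_univ, nsmul_eq_mul]
        field_simp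

theorem setOf_nsmul_add_nsmul_subset_setOf_exists_apply_eq_zero {h : ℕ}
    {M : Fin (h + 1) → Type*} [∀ i, AddGroup (M i)] (f : (∀ i, M i) → ∀ i, M i)
    (hf : ∀ (w : ∀ i, M i) (i : Fin (h + 1)), h • f w i = -((i : ℕ) • w i)) :
    {z | ∃ (w : ∀ i, M i) (j : ℕ), j ≤ h ∧ z = j • w + h • f w} ⊆ {z | ∃ i, z i = 0} := by
  rintro _ ⟨w, j, hj, rfl⟩
  exact ⟨⟨j, Nat.lt_succ_of_le hj⟩, by simp [hf]⟩

theorem initial_step_level_one_small_general (h : ℕ) (ε : ℝ) (hε : 0 < ε)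
    (M : Fin (h + 1) → Type*) [∀ i, AddCommGroup (M i)]
    [∀ i, Fintype (M i)]
    (hcard : ∀ i, ((h : ℝ) + 1) / ε < (Fintype.card (M i) : ℝ))
    (f : (∀ i, M i) → ∀ i, M i)
    (hf : ∀ (w : ∀ i, M i) (i : Fin (h + 1)), h • f w i = -((i : ℕ) • w i)) :
    let L₁ : Set (∀ i, M i) := {z | ∃ (w : ∀ i, M i) (j : ℕ), j ≤ h ∧ z = j • w + h • f w}
    (Nat.card L₁ : ℝ) < ε * (Fintype.card (∀ i, M i) : ℝ) := by
  intro L₁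
  have hcard' : ∀ i, (Fintype.card (Fin (h + 1)) : ℝ) / ε < Nat.card (M i) := by
    simpa [Nat.card_eq_fintype_card] using hcard
  calc (Nat.card L₁ : ℝ) = L₁.ncard := by rw [Nat.card_coe_set_eq]
    _ ≤ {z : ∀ i, M i | ∃ i, z i = 0}.ncard := by
        exact_mod_cast Set.ncard_le_ncard
          (setOf_nsmul_add_nsmul_subset_setOf_exists_apply_eq_zero f hf)
    _ < ε * Nat.card (∀ i, M i) := ncard_setOf_exists_apply_eq_zero_lt M hε hcard'
    _ = ε * Fintype.card (∀ i, M i) := by rw [Nat.card_eq_fintype_card]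

theorem initial_step_level_one_small (h : ℕ) (hh : 0 < h) (ε : ℝ) (hε : 0 < ε)
    (R : Fin (h + 1) → Type*) [∀ i, CommRing (R i)]
    (M : Fin (h + 1) → Type*) [∀ i, AddCommGroup (M i)] [∀ i, Module (R i) (M i)]
    [∀ i, Fintype (M i)]
    (hcard : ∀ i, ((h : ℝ) + 1) / ε < (Fintype.card (M i) : ℝ))
    (hu : ∀ i, ∀ r : ℕ, 1 ≤ r → r ≤ h → IsUnit ((r : ℕ) : R i))
    (f : (∀ i, M i) → ∀ i, M i)
    (hf : ∀ (w : ∀ i, M i) (i : Fin (h + 1)), h • f w i = -((i : ℕ) • w i)) :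
    let L₁ : Set (∀ i, M i) := {z | ∃ (w : ∀ i, M i) (j : ℕ), j ≤ h ∧ z = j • w + h • f w}
    (Nat.card L₁ : ℝ) < ε * (Fintype.card (∀ i, M i) : ℝ) :=
  initial_step_level_one_small_general h ε hε M hcard f hf
end

section
/- Let W and W' be finite abelian groups, let A = A(W⊕W', F) for a function F of the form F(w,w') = (f(w), g(w,w')), and let (γ,δ) be an admissible pair on W⊕W' representing z ∈ h·A. Define γ̂(w) = Σ_{w'∈W'} γ(w,w') and δ̂(w) = Σ_{w'∈W'} δ(w,w'). Then (γ̂, δ̂) is an admissible pair on W representing π(z) ∈ h·A(W,f), where π is the projection onto W, and the level of (γ̂, δ̂) is at most the level of (γ,δ). -/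
/-- The `h`-fold sumset of a set `A` in an additive group. -/
def nfoldSum {W : Type*} [AddCommMonoid W] (h : ℕ) (A : Set W) : Set W :=
  {z | ∃ a : Fin h → W, (∀ i, a i ∈ A) ∧ z = ∑ i, a i}

/-!
Summing `γ` and `δ` over the fibres of the projection `W × W' → W` preserves the total weight
`h`, and since the first coordinate of `F (w, w')` is `f w`, projecting the representation of
`z` gives a representation of `z.1` by the pair of fibre sums; such a sum lies in `h • A(W, f)`
because `nfoldSum` is additive in `h`. A point `w` of positive fibre weight has some `(w, w')`
of positive weight above it, so the level can only drop.
-/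

section nfoldSum

variable {M : Type*} [AddCommMonoid M] {A : Set M}

theorem zero_mem_nfoldSum_zero : (0 : M) ∈ nfoldSum 0 A :=
  ⟨Fin.elim0, fun i => i.elim0, by simp⟩

theorem add_mem_nfoldSum {m n : ℕ} {x y : M} (hx : x ∈ nfoldSum m A) (hy : y ∈ nfoldSum n A) :
    x + y ∈ nfoldSum (m + n) A := by
  obtain ⟨a, ha, rfl⟩ := hx
  obtain ⟨b, hb, rfl⟩ := hy
  refine ⟨Fin.append a b, Fin.addCases (by simpa using ha) (by simpa using hb), ?_⟩
  simp [Fin.sum_univ_add]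

theorem nsmul_mem_nfoldSum {x : M} (hx : x ∈ A) (n : ℕ) : n • x ∈ nfoldSum n A :=
  ⟨fun _ => x, fun _ => hx, by simp⟩

theorem sum_mem_nfoldSum {ι : Type*} (s : Finset ι) (n : ι → ℕ) (x : ι → M)
    (hx : ∀ i ∈ s, x i ∈ nfoldSum (n i) A) : ∑ i ∈ s, x i ∈ nfoldSum (∑ i ∈ s, n i) A := by
  induction s using Finset.cons_induction with
  | empty => simpa using zero_mem_nfoldSum_zero
  | cons i s _ ih =>
    rw [Finset.sum_cons, Finset.sum_cons]
    exact add_mem_nfoldSum (hx i (Finset.mem_cons_self i s))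
      (ih fun j hj => hx j (Finset.mem_cons_of_mem hj))

theorem sum_nsmul_add_nsmul_mem_nfoldSum {ι : Type*} [Fintype ι] (α β : ι → ℕ) (x y : ι → M)
    (hx : ∀ i, x i ∈ A) (hy : ∀ i, y i ∈ A) :
    ∑ i, (α i • x i + β i • y i) ∈ nfoldSum (∑ i, (α i + β i)) A :=
  sum_mem_nfoldSum _ _ _ fun i _ =>
    add_mem_nfoldSum (nsmul_mem_nfoldSum (hx i) _) (nsmul_mem_nfoldSum (hy i) _)

end nfoldSum

section Projection

variable {W W' : Type*} [Fintype W] [Fintype W']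

theorem fst_sum_nsmul_add_nsmul [AddCommMonoid W] [AddCommMonoid W'] (f : W → W)
    (F : W × W' → W × W') (hF : ∀ p, (F p).1 = f p.1) (γ δ : W × W' → ℕ) :
    (∑ p, (γ p • (p + F p) + δ p • F p)).1 =
      ∑ w, ((∑ w', γ (w, w')) • (w + f w) + (∑ w', δ (w, w')) • f w) := by
  simp only [Prod.fst_sum, Prod.fst_add, Prod.smul_fst, hF, Fintype.sum_prod_type,
    Finset.sum_add_distrib, Finset.sum_smul]

theorem card_filter_one_le_fiberSum_le (c : W × W' → ℕ) :
    (Finset.univ.filter fun w => 1 ≤ ∑ w', c (w, w')).card ≤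
      (Finset.univ.filter fun p => 1 ≤ c p).card := by
  refine Finset.card_le_card_of_surjOn Prod.fst fun w hw => ?_
  simp only [Finset.coe_filter, Finset.mem_univ, true_and, Set.mem_ofPred_eq] at hw ⊢
  obtain ⟨w', -, hw'⟩ := Finset.exists_ne_zero_of_sum_ne_zero (Nat.one_le_iff_ne_zero.1 hw)
  exact ⟨(w, w'), Nat.one_le_iff_ne_zero.2 hw', rfl⟩

end Projection

theorem projected_admissible_pair_general (W W' : Type*) [AddCommGroup W] [AddCommGroup W']
    [Fintype W] [Fintype W'] (h : ℕ)
    (f : W → W) (g : W × W' → W') (F : W × W' → W × W')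
    (hF : ∀ p : W × W', F p = (f p.1, g p))
    (γ δ : W × W' → ℕ)
    (hsum : (∑ p : W × W', (γ p + δ p)) = h)
    (z : W × W')
    (hz : z = ∑ p : W × W', (γ p • (p + F p) + δ p • F p)) :
    let γhat : W → ℕ := fun w => ∑ w' : W', γ (w, w')
    let δhat : W → ℕ := fun w => ∑ w' : W', δ (w, w')
    let A : Set W := {a | ∃ w, w + f w = a} ∪ {a | ∃ w, f w = a}
    (∀ w, γhat w ≤ h ∧ δhat w ≤ h) ∧
    (∑ w : W, (γhat w + δhat w)) = h ∧
    z.1 = ∑ w : W, (γhat w • (w + f w) + δhat w • f w) ∧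
    z.1 ∈ nfoldSum h A ∧
    (Finset.univ.filter fun w : W => 1 ≤ γhat w + δhat w).card ≤
      (Finset.univ.filter fun p : W × W' => 1 ≤ γ p + δ p).card := by
  intro γhat δhat A
  have hfiber : ∀ w, γhat w + δhat w = ∑ w', (γ (w, w') + δ (w, w')) :=
    fun w => Finset.sum_add_distrib.symm
  have hsum' : ∑ w, (γhat w + δhat w) = h := by
    simp only [hfiber, ← hsum, Fintype.sum_prod_type]
  have hz1 : z.1 = ∑ w, (γhat w • (w + f w) + δhat w • f w) :=
    hz ▸ fst_sum_nsmul_add_nsmul f F (fun p => by rw [hF]) γ δ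
  have hle : ∀ w, γhat w + δhat w ≤ h := fun w =>
    hsum' ▸ Finset.single_le_sum (f := fun w => γhat w + δhat w) (fun _ _ => Nat.zero_le _)
      (Finset.mem_univ w)
  refine ⟨fun w => ⟨by have := hle w; omega, by have := hle w; omega⟩, hsum', hz1, ?_, ?_⟩
  · rw [hz1, ← hsum']
    exact sum_nsmul_add_nsmul_mem_nfoldSum γhat δhat _ f (fun w => Or.inl ⟨w, rfl⟩)
      (fun w => Or.inr ⟨w, rfl⟩)
  · simp only [hfiber]
    exact card_filter_one_le_fiberSum_le fun p => γ p + δ p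

theorem projected_admissible_pair (W W' : Type*) [AddCommGroup W] [AddCommGroup W']
    [Fintype W] [Fintype W'] (h : ℕ) (hh : 0 < h)
    (f : W → W) (g : W × W' → W') (F : W × W' → W × W')
    (hF : ∀ p : W × W', F p = (f p.1, g p))
    (γ δ : W × W' → ℕ) (hbound : ∀ p, γ p ≤ h ∧ δ p ≤ h)
    (hsum : (∑ p : W × W', (γ p + δ p)) = h)
    (z : W × W')
    (hz : z = ∑ p : W × W', (γ p • (p + F p) + δ p • F p)) :
    let γhat : W → ℕ := fun w => ∑ w' : W', γ (w, w')
    let δhat : W → ℕ := fun w => ∑ w' : W', δ (w, w')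
    let A : Set W := {a | ∃ w, w + f w = a} ∪ {a | ∃ w, f w = a}
    (∀ w, γhat w ≤ h ∧ δhat w ≤ h) ∧
    (∑ w : W, (γhat w + δhat w)) = h ∧
    z.1 = ∑ w : W, (γhat w • (w + f w) + δhat w • f w) ∧
    z.1 ∈ nfoldSum h A ∧
    (Finset.univ.filter fun w : W => 1 ≤ γhat w + δhat w).card ≤
      (Finset.univ.filter fun p : W × W' => 1 ≤ γ p + δ p).card :=
  projected_admissible_pair_general W W' h f g F hF γ δ hsum z hz
end
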